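/- Let p and q be distinct primes, P an abelian p-group and Q an abelian q-group. Then every function f : P → Q of finite functional degree is constant. -/

import Mathlib

open scoped BigOperators

/-- Action of the integral group ring `ℤ[A]` on functions `A → B`:
`(τ_a * f)(x) = f(x + a)`, extended linearly. -/
noncomputable def groupRingAct {A B : Type*} [AddCommGroup A] [AddCommGroup B]
    (r : AddMonoidAlgebra ℤ A) (f : A → B) : A → B :=
  fun x => r.coeff.sum fun a z => z • f (x + a)

/-- The augmentation ideal of the group ring `R[A]`. -/
noncomputable def augIdealR (R : Type*) (A : Type*) [CommRing R] [AddCommGroup A] :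
    Ideal (AddMonoidAlgebra R A) :=
  Ideal.span {r : AddMonoidAlgebra R A | ∃ a : A, r = AddMonoidAlgebra.single a 1 - 1}

/-- The augmentation ideal of `ℤ[A]`. -/
noncomputable def augIdeal (A : Type*) [AddCommGroup A] : Ideal (AddMonoidAlgebra ℤ A) :=
  augIdealR ℤ A

/-- The functional degree of `f : A → B`: the least `n` with `I^(n+1) * f = 0`,
where `I` is the augmentation ideal of `ℤ[A]`; `⊤` if there is no such `n`. -/
noncomputable def fdeg {A B : Type*} [AddCommGroup A] [AddCommGroup B] (f : A → B) : ℕ∞ :=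
  sInf {N : ℕ∞ | ∃ n : ℕ, N = (n : ℕ∞) ∧
    ∀ r ∈ augIdeal A ^ (n + 1), groupRingAct r f = 0}

/-!
Induct on the degree. For each `a`, the difference `x ↦ f (x + a) - f x` is `(τ_a - 1) * f`,
which has smaller degree, so by induction it is translation invariant, i.e. a constant `c`. Then
`f (x + m • a) = f x + m • c`; taking `m` the order of `a`, a power of `p`, gives `m • c = 0`,
while the order of `c` is a power of `q`, so `c = 0`.
-/

open AddMonoidAlgebra

section GroupRingAction

variable {A B : Type*} [AddCommGroup A] [AddCommGroup B]

def translationHom : Multiplicative A →* Module.End ℤ (A → B) where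
  toFun a := LinearMap.funLeft ℤ B (· + a.toAdd)
  map_one' := by ext; simp
  map_mul' a b := by ext; simp [add_assoc]

theorem groupRingAct_eq_lift (r : AddMonoidAlgebra ℤ A) (f : A → B) :
    groupRingAct r f = lift ℤ (Module.End ℤ (A → B)) A translationHom r f := by
  ext x
  simp [groupRingAct, lift_apply, Finsupp.sum, translationHom]

theorem groupRingAct_mul (r s : AddMonoidAlgebra ℤ A) (f : A → B) :
    groupRingAct (r * s) f = groupRingAct r (groupRingAct s f) := by
  simp only [groupRingAct_eq_lift, map_mul, Module.End.mul_apply]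

theorem groupRingAct_single_sub_one (a : A) (f : A → B) :
    groupRingAct (single a 1 - 1) f = fun x => f (x + a) - f x := by
  ext x
  simp [groupRingAct_eq_lift, translationHom]

end GroupRingAction

section FunctionalDegree

variable {A B : Type*} [AddCommGroup A] [AddCommGroup B]

def HasFDegLE (n : ℕ) (f : A → B) : Prop :=
  ∀ r ∈ augIdeal A ^ (n + 1), groupRingAct r f = 0

theorem exists_hasFDegLE_of_fdeg_lt_top {f : A → B} (hf : fdeg f < ⊤) :
    ∃ n, HasFDegLE n f := by
  by_contra! h
  have hempty : {N : ℕ∞ | ∃ n : ℕ, N = n ∧ HasFDegLE n f} = ∅ :=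
    Set.eq_empty_of_forall_notMem fun _ ⟨n, _, hn⟩ => h n hn
  exact hf.ne ((congrArg sInf hempty).trans sInf_empty)

theorem single_sub_one_mem_augIdeal (a : A) : single a 1 - 1 ∈ augIdeal A :=
  Ideal.subset_span ⟨a, rfl⟩

theorem HasFDegLE.sub_translate {n : ℕ} {f : A → B} (hf : HasFDegLE (n + 1) f) (a : A) :
    HasFDegLE n fun x => f (x + a) - f x := by
  intro r hr
  rw [← groupRingAct_single_sub_one, ← groupRingAct_mul]
  rw [HasFDegLE, pow_succ] at hf
  exact hf _ (Ideal.mul_mem_mul hr (single_sub_one_mem_augIdeal a))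

theorem HasFDegLE.zero_map_add {f : A → B} (hf : HasFDegLE 0 f) (x a : A) : f (x + a) = f x := by
  have h := congrFun (hf _ (by simpa using single_sub_one_mem_augIdeal a)) x
  rwa [groupRingAct_single_sub_one, Pi.zero_apply, sub_eq_zero] at h

theorem eq_zero_of_map_add_eq_add_of_coprime {f : A → B} {a : A} {c : B}
    (hcop : (addOrderOf a).Coprime (addOrderOf c)) (hf : ∀ x, f (x + a) = f x + c) : c = 0 := by
  have hmul : ∀ m : ℕ, ∀ x, f (x + m • a) = f x + m • c := by
    intro m
    induction m with
    | zero => simp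
    | succ m ih => intro x; rw [succ_nsmul, ← add_assoc, hf, ih, succ_nsmul, add_assoc]
  have hkill : addOrderOf a • c = 0 := by
    simpa [addOrderOf_nsmul_eq_zero] using (hmul (addOrderOf a) 0).symm
  exact AddMonoid.addOrderOf_eq_one_iff.mp
    (hcop.symm.eq_one_of_dvd (addOrderOf_dvd_of_nsmul_eq_zero hkill))

theorem HasFDegLE.map_add_eq (hcop : ∀ (a : A) (c : B), (addOrderOf a).Coprime (addOrderOf c))
    {n : ℕ} {f : A → B} (hf : HasFDegLE n f) (x a : A) : f (x + a) = f x := by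
  induction n generalizing f x a with
  | zero => exact hf.zero_map_add x a
  | succ n ih =>
    have hconst : ∀ y, f (y + a) = f y + (f a - f 0) := fun y => by
      rw [← sub_eq_iff_eq_add']
      simpa using ih (hf.sub_translate a) 0 y
    have h0 := eq_zero_of_map_add_eq_add_of_coprime (hcop a _) hconst
    rw [hconst, h0, add_zero]

end FunctionalDegree

theorem coprime_addOrderOf_of_nsmul_eq_zero {G H : Type*} [AddMonoid G] [AddMonoid H]
    {a : G} {c : H} {m n : ℕ} (hmn : m.Coprime n) (ha : m • a = 0) (hc : n • c = 0) :
    (addOrderOf a).Coprime (addOrderOf c) :=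
  (hmn.coprime_dvd_left (addOrderOf_dvd_of_nsmul_eq_zero ha)).coprime_dvd_right
    (addOrderOf_dvd_of_nsmul_eq_zero hc)

theorem finite_fdeg_pq_const {p q : ℕ} (hp : p.Prime) (hq : q.Prime) (hpq : p ≠ q)
    {P Q : Type*} [AddCommGroup P] [AddCommGroup Q]
    (hP : ∀ x : P, ∃ n : ℕ, p ^ n • x = 0)
    (hQ : ∀ y : Q, ∃ n : ℕ, q ^ n • y = 0)
    (f : P → Q) (hf : fdeg f < ⊤) :
    ∃ c : Q, ∀ x : P, f x = c := by
  obtain ⟨n, hn⟩ := exists_hasFDegLE_of_fdeg_lt_top hf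
  have hcop : ∀ (a : P) (c : Q), (addOrderOf a).Coprime (addOrderOf c) := fun a c => by
    obtain ⟨i, hi⟩ := hP a
    obtain ⟨j, hj⟩ := hQ c
    exact coprime_addOrderOf_of_nsmul_eq_zero
      (Nat.Coprime.pow i j ((Nat.coprime_primes hp hq).mpr hpq)) hi hj
  exact ⟨f 0, fun x => by simpa using hn.map_add_eq hcop 0 x⟩
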